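/- arXiv:1205.1825 — 2 statements merged into one kernel-verified Lean document; each statement's English description precedes it below -/
import Mathlib

section
/- Let L be a regular language over a finite alphabet Σ, let a ∈ Σ and let k ∈ ℕ. Then a⁻¹(ℍ_k(L)) = ℍ_k(a⁻¹(L)) ∪ ⋃_{b∈Σ∖{a}} ℍ_{k−1}(b⁻¹(L)). -/
/-!
Quotient formula for the Hamming similarity operator.

`hamDist u v` is the Hamming distance: the number of positions at which `u`
and `v` differ when `|u| = |v|`, and `⊥` (encoded by `none`) otherwise.
For `k ∈ ℕ ∪ {⊥}` (encoded by `Option ℕ`), `hammingBall k L` is the language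
`ℍ_k(L)` of all words at Hamming distance at most `k` from some word of `L`
(with `ℍ_⊥(L) = ∅`).  `predO k` is `k - 1`, where `0 - 1 = ⊥` and `⊥ - 1 = ⊥`.
`leftQuot a L` is the left quotient `a⁻¹(L)`.  Unions of languages are
expressed with the lattice operations `⊔`/`⨆` on `Language σ` (which are
set-theoretic unions).
-/

/-- The left quotient `a⁻¹(L) = {w | aw ∈ L}` of a language w.r.t. a symbol. -/
def leftQuot {σ : Type} (a : σ) (L : Language σ) : Language σ :=
  {w | a :: w ∈ L}

/-- The Hamming distance of two words: the number of differing positions if the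
words have the same length, `⊥` (i.e. `none`) otherwise. -/
def hamDist {σ : Type} [DecidableEq σ] (u v : List σ) : Option ℕ :=
  if u.length = v.length then some ((u.zip v).countP fun p => p.1 != p.2) else none

/-- `ℍ_k(L)`: the set of words at Hamming distance at most `k` from some word
of `L`; the empty language when `k = ⊥`. -/
def hammingBall {σ : Type} [DecidableEq σ] (k : Option ℕ) (L : Language σ) : Language σ :=
  match k with
  | none => ⊥
  | some k => {w | ∃ u ∈ L, ∃ n : ℕ, hamDist w u = some n ∧ n ≤ k}

/-- `k - 1` on `ℕ ∪ {⊥}`: `0 - 1 = ⊥` and `⊥ - 1 = ⊥`. -/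
def predO (k : Option ℕ) : Option ℕ :=
  k.bind fun n => if n = 0 then none else some (n - 1)

lemma hamDist_cons {σ : Type} [DecidableEq σ] (a b : σ) (w u : List σ) :
    hamDist (a :: w) (b :: u) = (hamDist w u).map (fun m => m + if a = b then 0 else 1) := by
  simp only [hamDist, List.length_cons, Nat.add_right_cancel_iff, List.zip_cons_cons,
    List.countP_cons]
  split
  · by_cases h : a = b <;> simp [h]
  · rfl

lemma mem_sup' {σ : Type} (A B : Language σ) (w : List σ) :
    w ∈ A ⊔ B ↔ w ∈ A ∨ w ∈ B := Iff.rfl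

lemma mem_biSup' {σ : Type} (a : σ) (f : σ → Language σ) (w : List σ) :
    w ∈ (⨆ b ∈ {b : σ | b ≠ a}, f b) ↔ ∃ b, b ≠ a ∧ w ∈ f b := by
  simp [Language.mem_iSup]

/-- **Quotient formula for the Hamming operator.**
For a regular language `L` over a finite alphabet `σ`, a symbol `a` and `k ∈ ℕ`:
`a⁻¹(ℍ_k(L)) = ℍ_k(a⁻¹(L)) ∪ ⋃_{b ∈ Σ \ {a}} ℍ_{k-1}(b⁻¹(L))`. -/
theorem quotient_hammingBall {σ : Type} [Fintype σ] [DecidableEq σ]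
    (L : Language σ) (hL : L.IsRegular) (a : σ) (k : ℕ) :
    leftQuot a (hammingBall (some k) L) =
      hammingBall (some k) (leftQuot a L) ⊔
        ⨆ b ∈ {b : σ | b ≠ a}, hammingBall (predO (some k)) (leftQuot b L) := by
  ext w
  rw [mem_sup', mem_biSup']
  show (a :: w ∈ hammingBall (some k) L) ↔ _
  simp only [hammingBall, leftQuot, Set.mem_setOf_eq]
  constructor
  · rintro ⟨u, hu, n, hd, hn⟩
    match u with
    | [] => simp [hamDist] at hd
    | b :: u' =>
      rw [hamDist_cons] at hd
      rcases Option.map_eq_some_iff.1 hd with ⟨m, hm, rfl⟩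
      by_cases hab : a = b
      · subst hab
        exact Or.inl ⟨u', hu, m, hm, by simpa using hn⟩
      · right
        have hm1 : m + 1 ≤ k := by simpa [hab] using hn
        have hk : k ≠ 0 := by omega
        have hp : predO (some k) = some (k - 1) := by simp [predO, hk]
        refine ⟨b, fun h => hab h.symm, ?_⟩
        rw [hp]
        exact ⟨u', hu, m, hm, by omega⟩
  · rintro (⟨u, hu, n, hd, hn⟩ | ⟨b, hb, hw⟩)
    · exact ⟨a :: u, hu, n, by rw [hamDist_cons]; simp [hd], hn⟩
    · have hk : k ≠ 0 := by
        rintro rfl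
        simp [predO, hammingBall] at hw
        exact hw
      have hp : predO (some k) = some (k - 1) := by simp [predO, hk]
      rw [hp] at hw
      obtain ⟨u, hu, n, hd, hn⟩ := hw
      refine ⟨b :: u, hu, n + 1, by rw [hamDist_cons]; simp [hd, Ne.symm hb], by omega⟩
end

section
/- Let 𝔻 be the word comparison function associated with the cost function D given by D(α,α) = 0 for all α ∈ Σ ∪ {ε}, D(ε,β) = 1 for all β ∈ Σ, and D(α,β) = ⊥ otherwise. Then for all words w, w′ ∈ Σ*: 𝔻(w,w′) = |w′| − |w| if w is a subword (scattered subsequence) of w′, and 𝔻(w,w′) = ⊥ otherwise. -/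
/-!
The word comparison function associated with the "deletion" cost function
measures subword (scattered subsequence) containment.

A cost function over `S × S`, with `S = Σ ∪ {ε}`, is encoded as a function
`Option σ → Option σ → Option ℕ` (`none : Option σ` is `ε`, and
`none : Option ℕ` is the undefined value `⊥`) such that `C α α = 0`.

A split-up of a word `u` of size `n ≥ 1` is a tuple `(u₁, …, u_n) ∈ Sⁿ` with
`u₁ ⋯ u_n = u`.  An alignment of `u` and `v` is encoded as a list
`l : List (Option σ × Option σ)` with `l ≠ []` whose first (resp. second)
components form a split-up of `u` (resp. of `v`); concatenation of a split-up
is `List.filterMap`.  Its cost is the sum of the costs of its pairs, where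
`⊥ + x = x + ⊥ = ⊥` (`Option.map₂ (·+·)`).

The word comparison function `𝔽` associated with `C` maps `(u, v)` to the
minimum of the costs of all alignments of `u` and `v` whose cost is defined,
and to `⊥` if there is no such alignment.
-/

/-- A cost function: `C α α = 0` for every `α ∈ Σ ∪ {ε}`. -/
structure CostFun (σ : Type) where
  C : Option σ → Option σ → Option ℕ
  refl : ∀ α, C α α = some 0

/-- The cost of an alignment: the `⊥`-absorbing sum of the costs of its pairs. -/
def alignCost {σ : Type} (C : CostFun σ) (l : List (Option σ × Option σ)) : Option ℕ :=
  (l.map fun p => C.C p.1 p.2).foldr (fun x y => Option.map₂ (· + ·) x y) (some 0)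

/-- The set of defined costs of alignments (of size `≥ 1`) between `u` and `v`. -/
def alignCosts {σ : Type} (C : CostFun σ) (u v : List σ) : Set ℕ :=
  {n | ∃ l : List (Option σ × Option σ), l ≠ [] ∧
        l.filterMap Prod.fst = u ∧ l.filterMap Prod.snd = v ∧ alignCost C l = some n}

/-- The word comparison function associated with a cost function: the minimal
cost of an alignment of `u` and `v`, or `⊥` if no alignment has defined cost. -/
noncomputable def wordComp {σ : Type} (C : CostFun σ) (u v : List σ) : Option ℕ := by
  classical
  exact if (alignCosts C u v).Nonempty then some (sInf (alignCosts C u v)) else none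

/-- The cost function `D`: `D(α,α) = 0`, `D(ε,β) = 1` for `β ∈ Σ`, `⊥` otherwise. -/
def delCost (σ : Type) [DecidableEq σ] : CostFun σ where
  C α β := if α = β then some 0 else
    match α, β with
    | none, some _ => some 1
    | _, _ => none
  refl α := by simp


/-!
An alignment of defined `D`-cost only pairs equal symbols or inserts a letter of the second
word at cost `1`. Hence its first word is a subword of its second one and its cost is the
number of insertions, `|w'| - |w|`. Conversely, reading a derivation of `w.Sublist w'` step
by step (keep a letter, or insert one) yields such an alignment. So the set of defined costs
is `{|w'| - |w|}` or `∅`.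
-/

section

variable {σ : Type}

lemma alignCost_cons (C : CostFun σ) (a b : Option σ) (l : List (Option σ × Option σ)) :
    alignCost C ((a, b) :: l) = Option.map₂ (· + ·) (C.C a b) (alignCost C l) :=
  rfl

variable [DecidableEq σ]

lemma delCost_none_some (b : σ) : (delCost σ).C none (some b) = some 1 := by
  simp [delCost]

lemma delCost_eq_some {a b : Option σ} {c : ℕ} :
    (delCost σ).C a b = some c ↔ a = b ∧ c = 0 ∨ ∃ x, a = none ∧ b = some x ∧ c = 1 := by
  cases a <;> cases b <;> simp [delCost, eq_comm]

lemma sublist_of_alignCost_delCost_eq_some :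
    ∀ {l : List (Option σ × Option σ)} {n : ℕ}, alignCost (delCost σ) l = some n →
      (l.filterMap Prod.fst).Sublist (l.filterMap Prod.snd) ∧
        (l.filterMap Prod.snd).length = (l.filterMap Prod.fst).length + n
  | [], n, h => by simp_all [alignCost]
  | (a, b) :: l, n, h => by
    obtain ⟨c, m, hc, hm, rfl⟩ := Option.map₂_eq_some_iff.mp (alignCost_cons _ _ _ _ ▸ h)
    obtain ⟨hsub, hlen⟩ := sublist_of_alignCost_delCost_eq_some hm
    rcases delCost_eq_some.mp hc with ⟨rfl, rfl⟩ | ⟨x, rfl, rfl, rfl⟩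
    · cases a <;> simpa using ⟨hsub, by omega⟩
    · simpa using ⟨hsub.cons x, by omega⟩

lemma exists_alignCost_delCost_of_sublist {w w' : List σ} (h : w.Sublist w') :
    ∃ l : List (Option σ × Option σ), l ≠ [] ∧ l.filterMap Prod.fst = w ∧
      l.filterMap Prod.snd = w' ∧ alignCost (delCost σ) l = some (w'.length - w.length) := by
  induction h with
  | slnil => exact ⟨[(none, none)], by simp, rfl, rfl, by simp [alignCost, delCost]⟩
  | @cons w w' x h ih =>
    obtain ⟨l, -, rfl, rfl, hl⟩ := ih
    refine ⟨(none, some x) :: l, by simp, by simp, by simp, ?_⟩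
    rw [alignCost_cons, delCost_none_some, hl, Option.map₂_some_some]
    simp only [List.length_cons, Option.some.injEq]
    have := h.length_le
    omega
  | @cons_cons w w' x h ih =>
    obtain ⟨l, -, rfl, rfl, hl⟩ := ih
    refine ⟨(some x, some x) :: l, by simp, by simp, by simp, ?_⟩
    rw [alignCost_cons, (delCost σ).refl, hl, Option.map₂_some_some]
    simp

lemma alignCosts_delCost (w w' : List σ) :
    alignCosts (delCost σ) w w' = if w.Sublist w' then {w'.length - w.length} else ∅ := by
  split_ifs with h
  · refine Set.eq_singleton_iff_unique_mem.mpr ⟨exists_alignCost_delCost_of_sublist h, ?_⟩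
    rintro n ⟨l, -, rfl, rfl, hl⟩
    have := (sublist_of_alignCost_delCost_eq_some hl).2
    omega
  · refine Set.eq_empty_of_forall_notMem ?_
    rintro n ⟨l, -, rfl, rfl, hl⟩
    exact h (sublist_of_alignCost_delCost_eq_some hl).1

end

theorem wordComp_delCost_general {σ : Type} [DecidableEq σ] (w w' : List σ) :
    wordComp (delCost σ) w w' =
      if w.Sublist w' then some (w'.length - w.length) else none := by
  rw [wordComp, alignCosts_delCost]
  split_ifs <;> simp_all

/-- **The word comparison function `𝔻` associated with `D` measures subwords:**
`𝔻(w, w') = |w'| - |w|` if `w` is a subword (scattered subsequence) of `w'`,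
and `𝔻(w, w') = ⊥` otherwise. -/
theorem wordComp_delCost {σ : Type} [Fintype σ] [DecidableEq σ] (w w' : List σ) :
    wordComp (delCost σ) w w' =
      if w.Sublist w' then some (w'.length - w.length) else none :=
  wordComp_delCost_general w w'
end
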